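/- Let L be a compact topological orthoalgebra in which 0 is an isolated point. Then the set of atoms of L is open. -/
import Mathlib


/-- An orthoalgebra: a partial commutative, associative operation `oplus`
(defined on the relation `perp`), with unique orthocomplements, in which
`a ⊥ a` forces `a = 0`. -/
structure Orthoalgebra (L : Type*) where
  perp : L → L → Prop
  oplus : L → L → L
  compl : L → L
  zero : L
  one : L
  perp_comm : ∀ a b, perp a b → perp b a
  oplus_comm : ∀ a b, perp a b → oplus a b = oplus b a
  assoc : ∀ a b c, perp b c → perp a (oplus b c) →
    perp a b ∧ perp (oplus a b) c ∧ oplus a (oplus b c) = oplus (oplus a b) c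
  perp_compl : ∀ a, perp a (compl a)
  oplus_compl : ∀ a, oplus a (compl a) = one
  compl_unique : ∀ a b, perp a b → oplus a b = one → b = compl a
  perp_self_eq_zero : ∀ a, perp a a → a = zero
  zero_def : compl one = zero

/-- The induced order: `a ≤ b` iff `a ⊥ b'`. -/
def Orthoalgebra.le {L : Type*} (A : Orthoalgebra L) (a b : L) : Prop :=
  A.perp a (A.compl b)

/-- The partial difference `b ⊖ a = (a ⊕ b')'` (the unique `c` with `b = a ⊕ c` when `a ≤ b`). -/
def Orthoalgebra.ominus {L : Type*} (A : Orthoalgebra L) (b a : L) : L :=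
  A.compl (A.oplus a (A.compl b))

/-- A topological orthoalgebra: `⊥` is closed, `⊕` is continuous on `⊥`,
and `'` is continuous. -/
structure IsTOA {L : Type*} [TopologicalSpace L] (A : Orthoalgebra L) : Prop where
  closed_perp : IsClosed {p : L × L | A.perp p.1 p.2}
  cont_oplus : ContinuousOn (fun p : L × L => A.oplus p.1 p.2) {p : L × L | A.perp p.1 p.2}
  cont_compl : Continuous A.compl

/-- Compatibility: `a` and `b` admit a Mackey decomposition. -/
def Orthoalgebra.Compat {L : Type*} (A : Orthoalgebra L) (a b : L) : Prop :=
  ∃ c, A.le c a ∧ A.le c b ∧ A.perp a (A.ominus b c)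

/-- An atom: a minimal nonzero element. -/
def Orthoalgebra.IsAtom' {L : Type*} (A : Orthoalgebra L) (a : L) : Prop :=
  a ≠ A.zero ∧ ∀ b, A.le b a → b = A.zero ∨ b = a

namespace Orthoalgebra
variable {L : Type*} (A : Orthoalgebra L)

lemma compl_compl (a : L) : A.compl (A.compl a) = a :=
  (A.compl_unique (A.compl a) a (A.perp_comm _ _ (A.perp_compl a))
    (by rw [A.oplus_comm _ _ (A.perp_comm _ _ (A.perp_compl a)), A.oplus_compl])).symm

lemma zero_perp (a : L) : A.perp A.zero a := by
  have h1 : A.perp A.one (A.compl A.one) := A.perp_compl A.one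
  have h0 : A.perp A.zero (A.oplus a (A.compl a)) := by
    rw [A.oplus_compl]; rw [A.zero_def] at h1; exact A.perp_comm _ _ h1
  exact (A.assoc A.zero a (A.compl a) (A.perp_compl a) h0).1

lemma perp_zero (a : L) : A.perp a A.zero := A.perp_comm _ _ (A.zero_perp a)

lemma zero_oplus (a : L) : A.oplus A.zero a = a := by
  have h := A.assoc A.zero a (A.compl a) (A.perp_compl a)
    (by rw [A.oplus_compl, ← A.zero_def]; exact A.perp_comm _ _ (A.perp_compl A.one))
  have h1 : A.oplus (A.oplus A.zero a) (A.compl a) = A.one := by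
    rw [← h.2.2, A.oplus_compl, A.oplus_comm _ _ (A.zero_perp A.one), ← A.zero_def,
      A.oplus_compl]
  have := A.compl_unique (A.compl a) (A.oplus A.zero a) (A.perp_comm _ _ h.2.1)
    (by rw [A.oplus_comm _ _ (A.perp_comm _ _ h.2.1)]; exact h1)
  rw [this, A.compl_compl]

lemma oplus_zero (a : L) : A.oplus a A.zero = a := by
  rw [A.oplus_comm _ _ (A.perp_zero a), A.zero_oplus]

lemma cancel {a b c : L} (hab : A.perp a b) (hac : A.perp a c)
    (h : A.oplus a b = A.oplus a c) : b = c := by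
  have key : ∀ x : L, A.perp a x → A.oplus a x = A.oplus a b →
      x = A.compl (A.oplus (A.compl (A.oplus a b)) a) := by
    intro x hax hx
    set d := A.oplus a b with hd
    have hdd : A.perp (A.compl d) d := A.perp_comm _ _ (A.perp_compl d)
    have h3 := A.assoc (A.compl d) a x hax (by rw [hx]; exact hdd)
    refine A.compl_unique _ _ h3.2.1 ?_
    rw [← h3.2.2, hx, A.oplus_comm _ _ hdd, A.oplus_compl]
  rw [key b hab rfl, key c hac h.symm]

lemma assoc' {a b c : L} (hab : A.perp a b) (habc : A.perp (A.oplus a b) c) :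
    A.perp b c ∧ A.perp a (A.oplus b c) ∧ A.oplus a (A.oplus b c) = A.oplus (A.oplus a b) c := by
  have h1 : A.perp c (A.oplus b a) := by
    rw [← A.oplus_comm _ _ hab]; exact A.perp_comm _ _ habc
  have h2 := A.assoc c b a (A.perp_comm _ _ hab) h1
  refine ⟨A.perp_comm _ _ h2.1, ?_, ?_⟩
  · rw [← A.oplus_comm _ _ h2.1]; exact A.perp_comm _ _ h2.2.1
  · rw [← A.oplus_comm _ _ h2.1,
      A.oplus_comm _ _ (A.perp_comm _ _ (show A.perp (A.oplus c b) a from h2.2.1)),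
      ← h2.2.2, A.oplus_comm _ _ h1, A.oplus_comm _ _ hab]

lemma eq_zero_of_oplus_eq_zero {a b : L} (hab : A.perp a b)
    (h : A.oplus a b = A.zero) : a = A.zero := by
  have := A.assoc a a b hab (by rw [h]; exact A.perp_zero a)
  exact A.perp_self_eq_zero a this.1

/-- decomposition: if `a ≤ b` then `b = a ⊕ c` for some `c ⊥ a`. -/
lemma exists_oplus_of_le {a b : L} (h : A.le a b) :
    ∃ c, A.perp a c ∧ A.oplus a c = b := by
  set c := A.compl (A.oplus a (A.compl b)) with hc
  have h1 : A.perp c (A.oplus a (A.compl b)) :=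
    A.perp_comm _ _ (A.perp_compl (A.oplus a (A.compl b)))
  have h2 := A.assoc c a (A.compl b) h h1
  refine ⟨c, A.perp_comm _ _ h2.1, ?_⟩
  have h3 : A.oplus (A.oplus c a) (A.compl b) = A.one := by
    rw [← h2.2.2, A.oplus_comm _ _ h1, A.oplus_compl]
  have := A.compl_unique (A.compl b) (A.oplus c a) (A.perp_comm _ _ h2.2.1)
    (by rw [A.oplus_comm _ _ (A.perp_comm _ _ h2.2.1)]; exact h3)
  rw [A.oplus_comm _ _ (A.perp_comm _ _ h2.1), this, A.compl_compl]

lemma le_oplus {b c : L} (h : A.perp b c) : A.le b (A.oplus b c) := by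
  have h1 : A.perp (A.compl (A.oplus b c)) (A.oplus b c) :=
    A.perp_comm _ _ (A.perp_compl _)
  exact A.perp_comm _ _ (A.assoc (A.compl (A.oplus b c)) b c h h1).1

lemma le_antisymm' {a b : L} (h1 : A.le a b) (h2 : A.le b a) : a = b := by
  obtain ⟨c, hac, hc⟩ := A.exists_oplus_of_le h1
  obtain ⟨e, hbe, he⟩ := A.exists_oplus_of_le h2
  rw [← hc] at he hbe
  have h3 := A.assoc' hac hbe
  have : A.oplus c e = A.zero := by
    refine A.cancel h3.2.1 (A.perp_zero a) ?_
    rw [h3.2.2, he, A.oplus_zero]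
  have hc0 : c = A.zero := A.eq_zero_of_oplus_eq_zero h3.1 this
  rw [← hc, hc0, A.oplus_zero]

end Orthoalgebra

theorem atoms_open {L : Type*} [TopologicalSpace L] [CompactSpace L]
    (A : Orthoalgebra L) (hA : IsTOA A) (h0 : IsOpen ({A.zero} : Set L)) :
    IsOpen {a : L | A.IsAtom' a} := by
  -- The order relation is closed
  have hle : IsClosed {p : L × L | A.le p.1 p.2} := by
    have h : {p : L × L | A.le p.1 p.2} =
        (fun p : L × L => (p.1, A.compl p.2)) ⁻¹' {p : L × L | A.perp p.1 p.2} := rfl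
    rw [h]
    exact hA.closed_perp.preimage (continuous_fst.prodMk (hA.cont_compl.comp continuous_snd))
  -- hence L is Hausdorff
  haveI : T2Space L := by
    rw [t2_iff_isClosed_diagonal]
    have h : Set.diagonal L = {p : L × L | A.le p.1 p.2} ∩
        (Prod.swap ⁻¹' {p : L × L | A.le p.1 p.2}) := by
      ext p
      constructor
      · intro hp
        have : p.1 = p.2 := hp
        constructor
        · show A.le p.1 p.2; rw [this]; exact A.perp_compl _
        · show A.le p.2 p.1; rw [this]; exact A.perp_compl _
      · rintro ⟨h1, h2⟩
        exact A.le_antisymm' h1 h2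
    rw [h]
    exact hle.inter (hle.preimage continuous_swap)
  -- the set of pairs of orthogonal nonzero elements is compact
  set K : Set (L × L) := {p | A.perp p.1 p.2 ∧ p.1 ≠ A.zero ∧ p.2 ≠ A.zero} with hKdef
  have hKc : IsClosed K := by
    have h : K = {p : L × L | A.perp p.1 p.2} ∩
        (({A.zero}ᶜ : Set L) ×ˢ ({A.zero}ᶜ : Set L)) := by
      ext p; simp [hKdef, Set.mem_prod, and_assoc]
    rw [h]
    exact hA.closed_perp.inter (h0.isClosed_compl.prod h0.isClosed_compl)
  have himg : IsCompact ((fun p : L × L => A.oplus p.1 p.2) '' K) :=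
    hKc.isCompact.image_of_continuousOn (hA.cont_oplus.mono (fun p hp => hp.1))
  -- the atoms are the complement of the image together with zero
  have key : {a : L | A.IsAtom' a} =
      ((fun p : L × L => A.oplus p.1 p.2) '' K)ᶜ ∩ ({A.zero} : Set L)ᶜ := by
    ext a
    constructor
    · rintro ⟨ha0, hmin⟩
      refine ⟨?_, ha0⟩
      rintro ⟨⟨b, c⟩, ⟨hbc, hb0, hc0⟩, rfl⟩
      rcases hmin b (A.le_oplus hbc) with h | h
      · exact hb0 h
      · refine hc0 (A.cancel hbc (A.perp_zero b) ?_)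
        rw [A.oplus_zero]
        exact h.symm
    · rintro ⟨hni, ha0⟩
      refine ⟨ha0, fun b hb => ?_⟩
      by_contra hcon
      push_neg at hcon
      obtain ⟨hb0, hba⟩ := hcon
      obtain ⟨c, hbc, hsum⟩ := A.exists_oplus_of_le hb
      have hc0 : c ≠ A.zero := by
        rintro rfl
        rw [A.oplus_zero] at hsum
        exact hba hsum
      exact hni ⟨(b, c), ⟨hbc, hb0, hc0⟩, hsum⟩
  rw [key]
  exact (himg.isClosed.isOpen_compl).inter isClosed_singleton.isOpen_compl
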